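/- Let d ≥ 4 with d ≠ 6 and i ≥ 1 be integers, and for integers q with 2 ≤ q ≤ ⌊d/2⌋ set E_q = C(d+i+1, i+1) − C(d−2q+i+1, i+1) − C(q+i+1, i+1), where C(·,·) denotes the binomial coefficient. Then the minimum of the numbers E_q over q = 2, …, ⌊d/2⌋ is attained at q = 2; that is, E_q ≥ E_2 for every q with 2 ≤ q ≤ ⌊d/2⌋. -/
import Mathlib

lemma choose_add_eq_sum (n k s : ℕ) :
    (n + s).choose (k + 1)
      = n.choose (k + 1) + ∑ j ∈ Finset.range s, (n + j).choose k := by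
  induction s with
  | zero => simp
  | succ s ih =>
    rw [Finset.sum_range_succ, show n + (s + 1) = (n + s) + 1 from rfl,
      Nat.choose_succ_succ, ih]
    omega

lemma key_ineq (m r i : ℕ) (h : 1 ≤ m + r) :
    (m + i + 1).choose (i + 1) + (r + i + 4).choose (i + 1)
      ≤ (2 * r + m + i + 3).choose (i + 1) + (i + 3).choose (i + 1) := by
  have h1 : (r + i + 4).choose (i + 1)
      = (i + 3).choose (i + 1) + ∑ j ∈ Finset.range (r + 1), (i + 3 + j).choose i := by
    have := choose_add_eq_sum (i + 3) i (r + 1)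
    rw [show i + 3 + (r + 1) = r + i + 4 by ring] at this
    exact this
  have h2 : (2 * r + m + i + 3).choose (i + 1)
      = (m + i + 1).choose (i + 1)
        + ∑ j ∈ Finset.range (2 * r + 2), (m + i + 1 + j).choose i := by
    have := choose_add_eq_sum (m + i + 1) i (2 * r + 2)
    rw [show m + i + 1 + (2 * r + 2) = 2 * r + m + i + 3 by ring] at this
    exact this
  have h3 : ∑ j ∈ Finset.range (r + 1), (i + 3 + j).choose i
      ≤ ∑ j ∈ Finset.range (2 * r + 2), (m + i + 1 + j).choose i := by
    calc ∑ j ∈ Finset.range (r + 1), (i + 3 + j).choose i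
        ≤ ∑ j ∈ Finset.range (r + 1), (m + i + 1 + (r + 1 + j)).choose i := by
          apply Finset.sum_le_sum
          intro j _
          exact Nat.choose_le_choose _ (by omega)
      _ = ∑ j ∈ Finset.Ico (r + 1) (2 * r + 2), (m + i + 1 + j).choose i := by
          rw [Finset.sum_Ico_eq_sum_range, show 2 * r + 2 - (r + 1) = r + 1 by omega]
      _ ≤ ∑ j ∈ Finset.range (2 * r + 2), (m + i + 1 + j).choose i := by
          apply Finset.sum_le_sum_of_subset
          intro x hx
          simp only [Finset.mem_Ico, Finset.mem_range] at *
          omega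
  omega

/-- **Lemma 1.1.** Let `d ≥ 4`, `d ≠ 6`, `i ≥ 1`, and for `2 ≤ q ≤ ⌊d/2⌋` set
`E_q = C(d+i+1, i+1) - C(d-2q+i+1, i+1) - C(q+i+1, i+1)`. Then the minimum of the `E_q`
over `q = 2, …, ⌊d/2⌋` is attained at `q = 2`: `E_2 ≤ E_q` for all such `q`. -/
theorem E_min_at_two (d i : ℕ) (hd : 4 ≤ d) (hd6 : d ≠ 6) (hi : 1 ≤ i) :
    ∀ q : ℕ, 2 ≤ q → q ≤ d / 2 →
      (d + i + 1).choose (i + 1) - (d - 2 * 2 + i + 1).choose (i + 1)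
          - (2 + i + 1).choose (i + 1)
        ≤ (d + i + 1).choose (i + 1) - (d - 2 * q + i + 1).choose (i + 1)
          - (q + i + 1).choose (i + 1) := by
  intro q hq2 hqd
  rcases eq_or_lt_of_le hq2 with h | h3
  · rw [← h]
  · -- q ≥ 3, hence d ≥ 2q ≥ 6, and d ≠ 6 gives d ≥ 7
    have hq3 : 3 ≤ q := h3
    have hd2q : 2 * q ≤ d := by omega
    have hd7 : 7 ≤ d := by omega
    obtain ⟨m, hm⟩ : ∃ m, d = 2 * q + m := ⟨d - 2 * q, by omega⟩
    obtain ⟨r, hr⟩ : ∃ r, q = r + 3 := ⟨q - 3, by omega⟩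
    have key := key_ineq m r i (by omega)
    have e1 : d - 2 * 2 + i + 1 = 2 * r + m + i + 3 := by omega
    have e2 : d - 2 * q + i + 1 = m + i + 1 := by omega
    have e3 : q + i + 1 = r + i + 4 := by omega
    have e4 : 2 + i + 1 = i + 3 := by omega
    rw [e1, e2, e3, e4, Nat.sub_sub, Nat.sub_sub]
    exact Nat.sub_le_sub_left (by omega) _
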